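/- The q-Vandermonde identity: for nonnegative integers $m$, $n$, $k$, one has $\binom{m+n}{k}_q = \sum_{j=0}^{k} \binom{m}{k-j}_q \binom{n}{j}_q \, q^{j(m-k+j)}$ in $\mathbb{Z}[q]$. -/
import Mathlib

open Finset

noncomputable def q : RatFunc ℚ := RatFunc.X

noncomputable def qpoch (a : ℕ) : RatFunc ℚ := ∏ m ∈ Finset.range a, (1 - q ^ (m + 1))

noncomputable def gb (a b : ℕ) : RatFunc ℚ :=
  if b ≤ a then qpoch a / (qpoch b * qpoch (a - b)) else 0

lemma q_ne_zero : q ≠ 0 := by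
  simpa [q] using RatFunc.X_ne_zero (K := ℚ)

lemma one_sub_q_pow_ne_zero (m : ℕ) : (1 : RatFunc ℚ) - q ^ (m + 1) ≠ 0 := by
  have h : (1 : Polynomial ℚ) - Polynomial.X ^ (m + 1) ≠ 0 := by
    intro h
    have := congrArg (Polynomial.eval 0) h
    simp at this
  have h2 : (1 : RatFunc ℚ) - q ^ (m + 1)
      = algebraMap (Polynomial ℚ) (RatFunc ℚ) (1 - Polynomial.X ^ (m + 1)) := by
    simp [q, RatFunc.algebraMap_X, map_sub, map_pow]
  rw [h2]
  exact RatFunc.algebraMap_ne_zero h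

lemma qpoch_ne_zero (a : ℕ) : qpoch a ≠ 0 :=
  Finset.prod_ne_zero_iff.2 fun m _ => one_sub_q_pow_ne_zero m

lemma qpoch_zero : qpoch 0 = 1 := by simp [qpoch]

lemma qpoch_succ (a : ℕ) : qpoch (a + 1) = qpoch a * (1 - q ^ (a + 1)) := by
  simp [qpoch, Finset.prod_range_succ]

lemma gb_zero_right (a : ℕ) : gb a 0 = 1 := by
  simp [gb, qpoch_zero, div_self (qpoch_ne_zero a)]

lemma gb_self (a : ℕ) : gb a a = 1 := by
  simp [gb, qpoch_zero, div_self (qpoch_ne_zero a), mul_comm]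

lemma gb_of_lt {a b : ℕ} (h : a < b) : gb a b = 0 := by
  simp [gb, Nat.not_le.2 h]

lemma pascal (a b : ℕ) :
    gb (a + 1) (b + 1) = gb a (b + 1) + q ^ ((a : ℤ) - (b : ℤ)) * gb a b := by
  rcases lt_trichotomy b a with hlt | rfl | hgt
  · obtain ⟨s, rfl⟩ : ∃ s, a = b + s + 1 := ⟨a - b - 1, by omega⟩
    have hz : ((b + s + 1 : ℕ) : ℤ) - (b : ℤ) = ((s + 1 : ℕ) : ℤ) := by push_cast; ring
    rw [hz, zpow_natCast]
    unfold gb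
    rw [if_pos (by omega), if_pos (by omega), if_pos (by omega)]
    have e1 : b + s + 1 + 1 - (b + 1) = s + 1 := by omega
    have e2 : b + s + 1 - (b + 1) = s := by omega
    have e3 : b + s + 1 - b = s + 1 := by omega
    rw [e1, e2, e3]
    rw [show b + s + 1 + 1 = (b + s + 1) + 1 from rfl, qpoch_succ (b + s + 1),
      qpoch_succ s, qpoch_succ b]
    have hb := qpoch_ne_zero b
    have hs := qpoch_ne_zero s
    have h1 := one_sub_q_pow_ne_zero b
    have h2 := one_sub_q_pow_ne_zero s
    field_simp
    ring
  · rw [gb_self, gb_self, gb_of_lt (by omega), sub_self, zpow_zero]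
    ring
  · rw [gb_of_lt (by omega), gb_of_lt (by omega), gb_of_lt (by omega)]
    ring

/-- q-Vandermonde identity:
`[m+n, k]_q = ∑_{j=0}^k [m, k-j]_q [n, j]_q q^{j(m-k+j)}`.
The exponent `j * (m - k + j)` is taken in `ℤ`; for the terms where it might be
negative the Gaussian binomial factor `[m, k-j]_q` vanishes. -/
theorem stmt_2 (m n k : ℕ) :
    gb (m + n) k =
      ∑ j ∈ Finset.range (k + 1),
        gb m (k - j) * gb n j * q ^ ((j : ℤ) * ((m : ℤ) - (k : ℤ) + (j : ℤ))) := by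
  induction n generalizing k with
  | zero =>
    rw [Finset.sum_eq_single 0]
    · simp [gb_zero_right]
    · intro j _ hj0
      rw [gb_of_lt (Nat.pos_of_ne_zero hj0)]
      ring
    · intro h; simp at h
  | succ n ih =>
    cases k with
    | zero => simp [gb_zero_right]
    | succ K =>
      have hc : q ≠ 0 := q_ne_zero
      have key : ∑ j ∈ Finset.range (K + 1 + 1),
          gb m (K + 1 - j) * gb (n + 1) j * q ^ ((j : ℤ) * ((m : ℤ) - ((K + 1 : ℕ) : ℤ) + (j : ℤ)))
          = (∑ j ∈ Finset.range (K + 1 + 1),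
              gb m (K + 1 - j) * gb n j * q ^ ((j : ℤ) * ((m : ℤ) - ((K + 1 : ℕ) : ℤ) + (j : ℤ))))
            + q ^ ((m : ℤ) + (n : ℤ) - (K : ℤ)) *
              ∑ i ∈ Finset.range (K + 1),
                gb m (K - i) * gb n i * q ^ ((i : ℤ) * ((m : ℤ) - (K : ℤ) + (i : ℤ))) := by
        rw [Finset.sum_range_succ' _ (K + 1), Finset.sum_range_succ' (fun j => gb m (K + 1 - j) * gb n j * q ^ ((j : ℤ) * ((m : ℤ) - ((K + 1 : ℕ) : ℤ) + (j : ℤ)))) (K + 1)]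
        have hterm : ∀ i ∈ Finset.range (K + 1),
            gb m (K + 1 - (i + 1)) * gb (n + 1) (i + 1) *
              q ^ (((i + 1 : ℕ) : ℤ) * ((m : ℤ) - ((K + 1 : ℕ) : ℤ) + ((i + 1 : ℕ) : ℤ)))
            = gb m (K + 1 - (i + 1)) * gb n (i + 1) *
                q ^ (((i + 1 : ℕ) : ℤ) * ((m : ℤ) - ((K + 1 : ℕ) : ℤ) + ((i + 1 : ℕ) : ℤ)))
              + q ^ ((m : ℤ) + (n : ℤ) - (K : ℤ)) *
                (gb m (K - i) * gb n i * q ^ ((i : ℤ) * ((m : ℤ) - (K : ℤ) + (i : ℤ)))) := by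
          intro i _
          rw [pascal n i]
          have hKi : K + 1 - (i + 1) = K - i := by omega
          rw [hKi]
          have hexp : q ^ ((n : ℤ) - (i : ℤ)) * q ^ (((i + 1 : ℕ) : ℤ) * ((m : ℤ) - ((K + 1 : ℕ) : ℤ) + ((i + 1 : ℕ) : ℤ)))
              = q ^ ((m : ℤ) + (n : ℤ) - (K : ℤ)) * q ^ ((i : ℤ) * ((m : ℤ) - (K : ℤ) + (i : ℤ))) := by
            rw [← zpow_add₀ hc, ← zpow_add₀ hc]
            congr 1
            push_cast
            ring
          linear_combination gb m (K - i) * gb n i * hexp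
        rw [Finset.sum_congr rfl hterm, Finset.sum_add_distrib, ← Finset.mul_sum]
        simp [gb_zero_right]
        try ring
      rw [key, ← ih (K + 1), ← ih K]
      have : m + (n + 1) = (m + n) + 1 := by ring
      rw [this, pascal (m + n) K]
      congr 2
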